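/- Let G be a digraph on at least two vertices whose underlying graph is connected, and let T be a ditree such that γ(T □ G) = γ(T) · γ(G). Then T does not contain a strong support vertex that is adjacent (in the underlying tree) to two non-isolated leaves. -/

import Mathlib

open SimpleGraph

variable {V W : Type*}

/-- The closed out-neighborhood of `v` in the digraph with arc relation `A`. -/
def NplusC (A : V → V → Prop) (v : V) : Set V := insert v {u | A v u}

/-- The closed in-neighborhood of `v`. -/
def NminusC (A : V → V → Prop) (v : V) : Set V := insert v {u | A u v}

/-- The open out-neighborhood of `v`. -/
def NplusO (A : V → V → Prop) (v : V) : Set V := {u | A v u}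

/-- The open in-neighborhood of `v`. -/
def NminusO (A : V → V → Prop) (v : V) : Set V := {u | A u v}

/-- `S` is a dominating set: every vertex is in a closed out-neighborhood of a member of `S`. -/
def IsDomSet (A : V → V → Prop) (S : Set V) : Prop := ∀ u, ∃ v ∈ S, u ∈ NplusC A v

/-- The domination number of a digraph. -/
noncomputable def domNum (V : Type*) [Fintype V] (A : V → V → Prop) : ℕ :=
  sInf {n | ∃ S : Set V, IsDomSet A S ∧ S.ncard = n}

/-- `P` is a packing: closed in-neighborhoods of members are pairwise disjoint. -/
def IsPacking (A : V → V → Prop) (P : Set V) : Prop :=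
  P.Pairwise fun x y => Disjoint (NminusC A x) (NminusC A y)

/-- The packing number of a digraph. -/
noncomputable def packNum (V : Type*) [Fintype V] (A : V → V → Prop) : ℕ :=
  sSup {n | ∃ P : Set V, IsPacking A P ∧ P.ncard = n}

/-- `S` is a total dominating set: every vertex has an in-neighbor in `S`. -/
def IsTotalDomSet (A : V → V → Prop) (S : Set V) : Prop := ∀ u, ∃ v ∈ S, A v u

/-- The total domination number of a digraph. -/
noncomputable def totalDomNum (V : Type*) [Fintype V] (A : V → V → Prop) : ℕ :=
  sInf {n | ∃ S : Set V, IsTotalDomSet A S ∧ S.ncard = n}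

/-- `P` is an open packing: open in-neighborhoods of members are pairwise disjoint. -/
def IsOpenPacking (A : V → V → Prop) (P : Set V) : Prop :=
  P.Pairwise fun x y => Disjoint (NminusO A x) (NminusO A y)

/-- The open packing number of a digraph. -/
noncomputable def openPackNum (V : Type*) [Fintype V] (A : V → V → Prop) : ℕ :=
  sSup {n | ∃ P : Set V, IsOpenPacking A P ∧ P.ncard = n}

/-- The underlying (simple) graph of a digraph. -/
def ugr (A : V → V → Prop) : SimpleGraph V := SimpleGraph.fromRel A

/-- A ditree is a digraph whose underlying graph is a tree. -/
def IsDitree (A : V → V → Prop) : Prop := (ugr A).IsTree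

/-- Arc relation of the Cartesian product of two digraphs. -/
def cartArc (A : V → V → Prop) (B : W → W → Prop) : V × W → V × W → Prop :=
  fun p q => (p.1 = q.1 ∧ B p.2 q.2) ∨ (p.2 = q.2 ∧ A p.1 q.1)

/-- Arc relation of the direct product of two digraphs. -/
def dirArc (A : V → V → Prop) (B : W → W → Prop) : V × W → V × W → Prop :=
  fun p q => A p.1 q.1 ∧ B p.2 q.2

/-- The closed in-neighborhood graph of a digraph: distinct vertices are adjacent iff
their closed in-neighborhoods intersect. -/
def Ncg (A : V → V → Prop) : SimpleGraph V :=
  SimpleGraph.fromRel (fun u v => (NminusC A u ∩ NminusC A v).Nonempty)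

/-- The open in-neighborhood graph of a digraph: distinct vertices are adjacent iff
their open in-neighborhoods intersect. -/
def Nog (A : V → V → Prop) : SimpleGraph V :=
  SimpleGraph.fromRel (fun u v => (NminusO A u ∩ NminusO A v).Nonempty)

/-!
Let `S` be a minimum dominating set of `T □ G`, and let `l₁, l₂` be non-isolated leaves of `T`
adjacent to `v`, so that `v` is their only in-neighbour. In a ditree the closed in-neighbourhoods
are stars of the underlying tree; stars of a rooted tree have a Helly property (the top of the
deepest one lies in every star meeting it), so a greedy choice yields a packing `P` with
`γ(T) ≤ |P|`. At most one member of `P` has `v` in its closed in-neighbourhood; for every other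
`p`, `N⁻[p]` avoids `{l₁, l₂, v}`, and `S` has at least `γ(G)` vertices in `N⁻[p] × V(G)` because
their projections dominate `G`. Over `{l₁, l₂, v}` the set `S` has at least `γ(G) + 1` vertices:
the fibres over `N⁻[l₁] = {l₁, v}` already need `γ(G)`, and if `S` misses the fibre over `l₂`
it contains the whole fibre over `v`, which is larger than `γ(G)` since `G` has an arc.
Hence `|S| ≥ (γ(T) - 1) γ(G) + γ(G) + 1`.
-/

theorem Finset.exists_pairwiseDisjoint_forall_exists_top_mem {ι α : Type*} (F : ι → Set α)
    (top : ι → α) (rank : ι → ℕ) (top_mem : ∀ i, top i ∈ F i)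
    (helly : ∀ i j, rank i ≤ rank j → (F i ∩ F j).Nonempty → top j ∈ F i) (W : Finset ι) :
    ∃ P ⊆ W, (P : Set ι).PairwiseDisjoint F ∧ ∀ i ∈ W, ∃ j ∈ P, top j ∈ F i := by
  classical
  induction W using Finset.strongInduction with
  | H W ih =>
    rcases W.eq_empty_or_nonempty with rfl | hW
    · exact ⟨∅, subset_rfl, by simp, by simp⟩
    obtain ⟨j, hjW, hj⟩ := W.exists_max_image rank hW
    set W' := W.filter fun i => Disjoint (F i) (F j)
    have hjW' : j ∉ W' := fun h =>
      Set.disjoint_left.mp (Finset.mem_filter.mp h).2 (top_mem j) (top_mem j)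
    obtain ⟨P, hPW', hP, hdom⟩ :=
      ih W' (Finset.ssubset_iff_subset_ne.mpr ⟨W.filter_subset _, fun h => hjW' (h ▸ hjW)⟩)
    refine ⟨insert j P, Finset.insert_subset hjW (hPW'.trans (W.filter_subset _)), ?_, ?_⟩
    · rw [Finset.coe_insert]
      refine hP.insert fun i hi _ => ?_
      exact (Finset.mem_filter.mp (hPW' hi)).2.symm
    · intro i hi
      by_cases hdisj : Disjoint (F i) (F j)
      · obtain ⟨k, hk, hki⟩ := hdom i (Finset.mem_filter.mpr ⟨hi, hdisj⟩)
        exact ⟨k, Finset.mem_insert_of_mem hk, hki⟩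
      · exact ⟨j, Finset.mem_insert_self _ _,
          helly i j (hj i hi) (Set.not_disjoint_iff_nonempty_inter.mp hdisj)⟩

namespace SimpleGraph.IsTree

variable {V : Type*} {G : SimpleGraph V} (hG : G.IsTree) (r : V)

noncomputable def pathToRoot (x : V) : G.Walk x r := (hG.existsUnique_path x r).exists.choose

lemma isPath_pathToRoot (x : V) : (hG.pathToRoot r x).IsPath :=
  (hG.existsUnique_path x r).exists.choose_spec

lemma pathToRoot_eq {x : V} {p : G.Walk x r} (hp : p.IsPath) : hG.pathToRoot r x = p :=
  (hG.existsUnique_path x r).unique (hG.isPath_pathToRoot r x) hp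

noncomputable def parent (x : V) : V := (hG.pathToRoot r x).snd

lemma parent_root : hG.parent r r = r := by
  rw [parent, hG.pathToRoot_eq r Walk.IsPath.nil]
  rfl

lemma not_nil_pathToRoot {x : V} (hx : hG.parent r x ≠ x) : ¬ (hG.pathToRoot r x).Nil := by
  intro hnil
  obtain rfl := hnil.eq
  exact hx (hG.parent_root x)

lemma adj_parent {x : V} (hx : hG.parent r x ≠ x) : G.Adj x (hG.parent r x) :=
  Walk.adj_snd (hG.not_nil_pathToRoot r hx)

lemma dist_parent_add_one {x : V} (hx : hG.parent r x ≠ x) :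
    G.dist r (hG.parent r x) + 1 = G.dist r x := by
  have hle : G.dist r (hG.parent r x) + 1 ≤ G.dist r x := by
    obtain ⟨p, hp, hlen⟩ := (hG.connected x r).exists_path_of_dist
    calc G.dist r (hG.parent r x) + 1 ≤ (hG.pathToRoot r x).tail.length + 1 := by
          rw [dist_comm]; exact Nat.add_le_add_right (dist_le _) 1
      _ = (hG.pathToRoot r x).length := Walk.length_tail_add_one (hG.not_nil_pathToRoot r hx)
      _ = G.dist r x := by rw [hG.pathToRoot_eq r hp, hlen, dist_comm]
  rcases hG.dist_eq_dist_add_one_of_adj r (hG.adj_parent r hx) with h | h <;> omega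

lemma parent_eq_or_parent_eq_of_adj {x y : V} (hxy : G.Adj x y) :
    hG.parent r x = y ∨ hG.parent r y = x := by
  by_cases hy : y ∈ (hG.pathToRoot r x).support
  · exact Or.inl (hG.isAcyclic.eq_snd_of_adj_start (hG.isPath_pathToRoot r x) hxy hy).symm
  · right
    rw [parent, hG.pathToRoot_eq r ((hG.isPath_pathToRoot r x).cons hy (h := hxy.symm)),
      Walk.snd_cons]

variable (F : V → Set V)

open Classical in
/-- When `w ∈ F w ⊆ {w} ∪ G.neighborSet w`, this is the vertex of `F w` closest to the root. -/
noncomputable def starTop (w : V) : V := if hG.parent r w ∈ F w then hG.parent r w else w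

variable {F}

lemma starTop_mem (hself : ∀ w, w ∈ F w) (w : V) : hG.starTop r F w ∈ F w := by
  unfold starTop
  split_ifs with h
  exacts [h, hself w]

lemma starTop_cases (hstar : ∀ w x, x ∈ F w → x = w ∨ G.Adj x w) {w x : V} (hx : x ∈ F w) :
    hG.starTop r F w = x ∨
    (hG.starTop r F w = hG.parent r x ∧ G.dist r (hG.starTop r F w) + 1 = G.dist r x) ∨
    (hG.parent r x = w ∧ G.dist r (hG.starTop r F w) + 2 = G.dist r x) := by
  rcases hstar w x hx with rfl | hadj
  · unfold starTop
    split_ifs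
    · by_cases hp : hG.parent r x = x
      · exact Or.inl hp
      · exact Or.inr (Or.inl ⟨rfl, hG.dist_parent_add_one r hp⟩)
    · exact Or.inl rfl
  rcases hG.parent_eq_or_parent_eq_of_adj r hadj with hpx | hpw
  · have hx' : hG.parent r x ≠ x := hpx ▸ hadj.ne'
    have hdx := hG.dist_parent_add_one r hx'
    rw [hpx] at hdx
    unfold starTop
    split_ifs
    · by_cases hp : hG.parent r w = w
      · exact Or.inr (Or.inl ⟨hp.trans hpx.symm, by rw [hp]; exact hdx⟩)
      · have hdw := hG.dist_parent_add_one r hp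
        exact Or.inr (Or.inr ⟨hpx, by omega⟩)
    · exact Or.inr (Or.inl ⟨hpx.symm, hdx⟩)
  · left
    unfold starTop
    rw [if_pos (hpw ▸ hx), hpw]

lemma starTop_mem_of_dist_le (hself : ∀ w, w ∈ F w)
    (hstar : ∀ w x, x ∈ F w → x = w ∨ G.Adj x w) {w w₀ : V}
    (hle : G.dist r (hG.starTop r F w) ≤ G.dist r (hG.starTop r F w₀))
    (hmeet : (F w ∩ F w₀).Nonempty) : hG.starTop r F w₀ ∈ F w := by
  obtain ⟨x, hx, hx₀⟩ := hmeet
  rcases hG.starTop_cases r hstar hx₀ with h | ⟨h, hd⟩ | ⟨hpx₀, hd⟩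
  · rw [h]; exact hx
  · rcases hG.starTop_cases r hstar hx with g | ⟨g, -⟩ | ⟨hpx, -⟩
    · rw [g] at hle; omega
    · rw [h, ← g]; exact hG.starTop_mem r hself w
    · rw [h, hpx]; exact hself w
  · rcases hG.starTop_cases r hstar hx with g | ⟨-, gd⟩ | ⟨hpx, -⟩
    · rw [g] at hle; omega
    · omega
    · obtain rfl : w = w₀ := hpx.symm.trans hpx₀
      exact hG.starTop_mem r hself w

end SimpleGraph.IsTree

lemma SimpleGraph.eq_of_adj_of_ncard_neighborSet_eq_one {V : Type*} {G : SimpleGraph V}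
    {l v t : V} (hl : (G.neighborSet l).ncard = 1) (hv : G.Adj l v) (ht : G.Adj l t) : t = v := by
  obtain ⟨a, ha⟩ := Set.ncard_eq_one.mp hl
  have hv' : v ∈ G.neighborSet l := hv
  have ht' : t ∈ G.neighborSet l := ht
  rw [ha, Set.mem_singleton_iff] at hv' ht'
  exact ht'.trans hv'.symm

lemma eq_of_arc_of_ncard_neighborSet_ugr_eq_one {V : Type*} {A : V → V → Prop}
    (hirr : ∀ v, ¬ A v v) {l v t : V} (hl : ((ugr A).neighborSet l).ncard = 1)
    (hv : (ugr A).Adj l v) (ht : A t l ∨ A l t) : t = v :=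
  eq_of_adj_of_ncard_neighborSet_eq_one hl hv
    ((fromRel_adj A l t).mpr ⟨by rintro rfl; exact hirr l (ht.elim id id), ht.symm⟩)

lemma mem_NminusC_of_mem_NminusC_of_leaf {V : Type*} {A : V → V → Prop} (hirr : ∀ v, ¬ A v v)
    {v l p : V} (hlv : (ugr A).Adj l v) (hl : ((ugr A).neighborSet l).ncard = 1)
    (hin : ∃ u, A u l) (hlp : l ∈ NminusC A p) : v ∈ NminusC A p := by
  have honly : ∀ {t}, A t l ∨ A l t → t = v := eq_of_arc_of_ncard_neighborSet_ugr_eq_one hirr hl hlv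
  obtain ⟨u, hu⟩ := hin
  rcases hlp with rfl | hlp
  · exact Set.mem_insert_of_mem _ (honly (Or.inl hu) ▸ hu)
  · rw [honly (Or.inr hlp)]
    exact Set.mem_insert v _

section Domination

variable {V : Type*} (A : V → V → Prop)

lemma mem_NplusC_iff_mem_NminusC {u v : V} : u ∈ NplusC A v ↔ v ∈ NminusC A u := by
  simp only [NplusC, NminusC, Set.mem_insert_iff, Set.mem_ofPred_eq, eq_comm]

lemma eq_or_adj_of_mem_NminusC {w x : V} (hx : x ∈ NminusC A w) : x = w ∨ (ugr A).Adj x w := by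
  rcases hx with rfl | hx
  · exact Or.inl rfl
  by_cases hxw : x = w
  · exact Or.inl hxw
  · exact Or.inr ((fromRel_adj A x w).mpr ⟨hxw, Or.inl hx⟩)

variable {A} in
lemma IsPacking.ncard_le_ncard_sdiff_add_one [Finite V] {P : Set V} (hP : IsPacking A P) (v : V) :
    P.ncard ≤ (P \ {p | v ∈ NminusC A p}).ncard + 1 := by
  have hbad : (P ∩ {p | v ∈ NminusC A p}).ncard ≤ 1 :=
    (Set.ncard_le_one).mpr fun p hp q hq => by_contra fun hpq =>
      Set.disjoint_left.mp (hP hp.1 hq.1 hpq) hp.2 hq.2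
  have := Set.ncard_inter_add_ncard_sdiff_eq_ncard P {p | v ∈ NminusC A p}
  omega

variable [Fintype V] {A}

lemma domNum_le {S : Set V} (hS : IsDomSet A S) : domNum V A ≤ S.ncard :=
  Nat.sInf_le ⟨S, hS, rfl⟩

variable (A) in
lemma exists_isDomSet_ncard_eq_domNum : ∃ S, IsDomSet A S ∧ S.ncard = domNum V A := by
  refine Nat.sInf_mem (s := {n | ∃ S : Set V, IsDomSet A S ∧ S.ncard = n}) ?_
  exact ⟨_, Set.univ, fun u => ⟨u, Set.mem_univ u, Set.mem_insert u _⟩, rfl⟩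

lemma domNum_lt_card_of_adj {a b : V} (hab : (ugr A).Adj a b) : domNum V A < Fintype.card V := by
  obtain ⟨hne, harc⟩ := (fromRel_adj A a b).mp hab
  wlog h : A a b generalizing a b
  · exact this hab.symm hne.symm harc.symm (harc.resolve_left h)
  have hdom : IsDomSet A (Set.univ \ {b}) := by
    intro u
    by_cases hu : u = b
    · exact ⟨a, ⟨Set.mem_univ a, hu ▸ hne⟩, Set.mem_insert_of_mem _ (hu ▸ h)⟩
    · exact ⟨u, ⟨Set.mem_univ u, hu⟩, Set.mem_insert u _⟩
  calc domNum V A ≤ (Set.univ \ {b}).ncard := domNum_le hdom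
    _ < Nat.card V := Set.ncard_lt_card fun h' => (h'.symm ▸ Set.mem_univ b).2 rfl
    _ = Fintype.card V := Nat.card_eq_fintype_card

lemma domNum_lt_card_of_connected (hconn : (ugr A).Connected) (hcard : 2 ≤ Fintype.card V) :
    domNum V A < Fintype.card V := by
  have : Nontrivial V := Fintype.one_lt_card_iff_nontrivial.mp hcard
  obtain ⟨b, hb⟩ := hconn.preconnected.exists_adj_of_nontrivial (Classical.arbitrary V)
  exact domNum_lt_card_of_adj hb

variable (A) in
lemma bddAbove_packing_ncards : BddAbove {n | ∃ P : Set V, IsPacking A P ∧ P.ncard = n} :=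
  ⟨Nat.card V, fun _ ⟨P, _, hP⟩ => hP ▸ Set.ncard_le_card P⟩

lemma IsPacking.ncard_le_packNum {P : Set V} (hP : IsPacking A P) : P.ncard ≤ packNum V A :=
  le_csSup (bddAbove_packing_ncards A) ⟨P, hP, rfl⟩

variable (A) in
lemma exists_isPacking_ncard_eq_packNum : ∃ P, IsPacking A P ∧ P.ncard = packNum V A := by
  apply Nat.sSup_mem _ (bddAbove_packing_ncards A)
  exact ⟨0, ∅, Set.pairwise_empty _, Set.ncard_empty V⟩

theorem IsDitree.domNum_le_packNum (hT : IsDitree A) : domNum V A ≤ packNum V A := by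
  obtain ⟨r⟩ := hT.connected.nonempty
  have hself : ∀ w, w ∈ NminusC A w := fun w => Set.mem_insert w _
  have hstar : ∀ w x, x ∈ NminusC A w → x = w ∨ (ugr A).Adj x w :=
    fun _ _ => eq_or_adj_of_mem_NminusC A
  set top := hT.starTop r (NminusC A)
  obtain ⟨P, -, hP, hdom⟩ := Finset.exists_pairwiseDisjoint_forall_exists_top_mem (NminusC A) top
    (fun w => (ugr A).dist r (top w)) (hT.starTop_mem r hself)
    (fun _ _ hle hmeet => hT.starTop_mem_of_dist_le r hself hstar hle hmeet) Finset.univ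
  have hD : IsDomSet A (top '' P) := fun u => by
    obtain ⟨p, hp, hpu⟩ := hdom u (Finset.mem_univ u)
    exact ⟨top p, Set.mem_image_of_mem top hp, (mem_NplusC_iff_mem_NminusC A).mpr hpu⟩
  calc domNum V A ≤ (top '' P).ncard := domNum_le hD
    _ ≤ (P : Set V).ncard := Set.ncard_image_le P.finite_toSet
    _ ≤ packNum V A := IsPacking.ncard_le_packNum hP

end Domination

section CartesianProduct

variable {V W : Type*} {A : V → V → Prop} {B : W → W → Prop} {S : Set (V × W)}

open Set

lemma IsDomSet.forall_mem_of_fiber_empty (hS : IsDomSet (cartArc A B) S) {l v : V}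
    (hin : ∀ t, A t l → t = v) (hempty : ∀ g, (l, g) ∉ S) (h : W) : (v, h) ∈ S := by
  obtain ⟨⟨t, g⟩, htg, hmem⟩ := hS (l, h)
  simp only [NplusC, cartArc, mem_insert_iff, mem_ofPred_eq, Prod.mk.injEq] at hmem
  rcases hmem with ⟨rfl, rfl⟩ | ⟨rfl, -⟩ | ⟨rfl, htl⟩
  · exact absurd htg (hempty h)
  · exact absurd htg (hempty g)
  · rwa [← hin t htl]

variable [Finite V] [Fintype W]

lemma Set.ncard_inter_prod_add_ncard_inter_prod_le (S : Set (V × W)) {X Y : Set V}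
    (h : Disjoint X Y) :
    (S ∩ X ×ˢ univ).ncard + (S ∩ Y ×ˢ univ).ncard ≤ S.ncard := by
  rw [← ncard_union_eq ((disjoint_prod.mpr (Or.inl h)).mono inter_subset_right inter_subset_right)]
  exact ncard_le_ncard (union_subset inter_subset_left inter_subset_left)

lemma IsDomSet.domNum_le_ncard_fiber (hS : IsDomSet (cartArc A B) S) (p : V) :
    domNum W B ≤ (S ∩ NminusC A p ×ˢ univ).ncard := by
  have hdom : IsDomSet B (Prod.snd '' (S ∩ NminusC A p ×ˢ univ)) := by
    intro h
    obtain ⟨⟨t, g⟩, htg, hmem⟩ := hS (p, h)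
    have hp : p ∈ NminusC A p := mem_insert p _
    simp only [NplusC, cartArc, mem_insert_iff, mem_ofPred_eq, Prod.mk.injEq] at hmem
    rcases hmem with ⟨rfl, rfl⟩ | ⟨rfl, hgh⟩ | ⟨rfl, htp⟩
    · exact ⟨_, ⟨_, ⟨htg, hp, mem_univ _⟩, rfl⟩, mem_insert _ _⟩
    · exact ⟨_, ⟨_, ⟨htg, hp, mem_univ _⟩, rfl⟩, mem_insert_of_mem _ hgh⟩
    · exact ⟨_, ⟨_, ⟨htg, mem_insert_of_mem _ htp, mem_univ _⟩, rfl⟩, mem_insert _ _⟩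
  exact (domNum_le hdom).trans (ncard_image_le (toFinite _))

lemma IsPacking.ncard_mul_domNum_le {P : Set V} (hP : IsPacking A P)
    (hS : IsDomSet (cartArc A B) S) :
    P.ncard * domNum W B ≤ (S ∩ (⋃ p ∈ P, NminusC A p) ×ˢ univ).ncard := by
  have hunion : S ∩ (⋃ p ∈ P, NminusC A p) ×ˢ univ = ⋃ p ∈ P, S ∩ NminusC A p ×ˢ univ := by
    rw [iUnion₂_prod_const, inter_iUnion₂]
  have hdisj : P.PairwiseDisjoint fun p => S ∩ NminusC A p ×ˢ univ := fun p hp q hq hpq =>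
    (disjoint_prod.mpr (Or.inl (hP hp hq hpq))).mono inter_subset_right inter_subset_right
  rw [hunion, P.toFinite.ncard_biUnion (fun _ _ => toFinite _) hdisj,
    finsum_mem_eq_finite_toFinset_sum _ P.toFinite, ncard_eq_toFinset_card P, ← smul_eq_mul]
  exact Finset.card_nsmul_le_sum _ _ _ fun p _ => hS.domNum_le_ncard_fiber p

lemma IsDomSet.domNum_add_one_le_ncard_of_leaves (hS : IsDomSet (cartArc A B) S)
    (hB : domNum W B < Fintype.card W) {v l₁ l₂ : V} (hl : l₁ ≠ l₂) (hvl₂ : v ≠ l₂)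
    (hin₁ : ∀ t, A t l₁ → t = v) (hin₂ : ∀ t, A t l₂ → t = v) :
    domNum W B + 1 ≤ (S ∩ {l₁, l₂, v} ×ˢ univ).ncard := by
  by_cases hl₂ : ∃ g, (l₂, g) ∈ S
  · obtain ⟨g, hg⟩ := hl₂
    have hN : NminusC A l₁ ⊆ {l₁, l₂, v} := by
      rintro t (rfl | ht)
      · exact mem_insert t _
      · rw [hin₁ t ht]; simp
    have hl₂N : l₂ ∉ NminusC A l₁ := by
      rintro (h | h)
      exacts [hl h.symm, hvl₂ (hin₁ l₂ h).symm]
    have hssub : S ∩ NminusC A l₁ ×ˢ univ ⊂ S ∩ {l₁, l₂, v} ×ˢ univ :=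
      ssubset_of_subset_of_ne (inter_subset_inter_right _ (prod_mono hN subset_rfl))
        fun h => hl₂N (h ▸ ⟨hg, by simp, mem_univ g⟩ : (l₂, g) ∈ S ∩ NminusC A l₁ ×ˢ univ).2.1
    exact (hS.domNum_le_ncard_fiber l₁).trans_lt (ncard_lt_ncard hssub)
  · push Not at hl₂
    have hsub : {v} ×ˢ univ ⊆ S ∩ {l₁, l₂, v} ×ˢ univ := by
      rintro ⟨t, h⟩ ⟨rfl, -⟩
      exact ⟨hS.forall_mem_of_fiber_empty hin₂ hl₂ h, by simp, mem_univ h⟩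
    calc domNum W B + 1 ≤ Fintype.card W := hB
      _ = ({v} ×ˢ univ : Set (V × W)).ncard := by
        rw [ncard_prod, ncard_singleton, ncard_univ, Nat.card_eq_fintype_card, one_mul]
      _ ≤ _ := ncard_le_ncard hsub

end CartesianProduct

theorem stmt17_general {VT VG : Type*} [Fintype VT] [Fintype VG]
    (AT : VT → VT → Prop) (AG : VG → VG → Prop)
    (hirrT : ∀ v, ¬ AT v v)
    (hGconn : (ugr AG).Connected) (hGcard : 2 ≤ Fintype.card VG)
    (hT : IsDitree AT)
    (heq : domNum (VT × VG) (cartArc AT AG) = domNum VT AT * domNum VG AG) :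
    ¬ ∃ (v l1 l2 : VT), l1 ≠ l2 ∧
        (ugr AT).Adj v l1 ∧ (ugr AT).Adj v l2 ∧
        ((ugr AT).neighborSet l1).ncard = 1 ∧ ((ugr AT).neighborSet l2).ncard = 1 ∧
        (∃ u, AT u l1) ∧ (∃ u, AT u l2) := by
  rintro ⟨v, l₁, l₂, hl₁₂, hvl₁, hvl₂, hdeg₁, hdeg₂, hin₁, hin₂⟩
  obtain ⟨S, hS, hScard⟩ := exists_isDomSet_ncard_eq_domNum (cartArc AT AG)
  obtain ⟨P, hP, hPcard⟩ := exists_isPacking_ncard_eq_packNum AT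
  have hP' := hP.ncard_le_ncard_sdiff_add_one v
  set P' := P \ {p | v ∈ NminusC AT p}
  have hdisj : Disjoint (⋃ p ∈ P', NminusC AT p) {l₁, l₂, v} := by
    simp only [Set.disjoint_iUnion₂_left]
    rintro p ⟨-, hvp⟩
    refine Set.disjoint_right.mpr ?_
    rintro x (rfl | rfl | rfl) hx
    exacts [hvp (mem_NminusC_of_mem_NminusC_of_leaf hirrT hvl₁.symm hdeg₁ hin₁ hx),
      hvp (mem_NminusC_of_mem_NminusC_of_leaf hirrT hvl₂.symm hdeg₂ hin₂ hx), hvp hx]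
  have hP'pack : IsPacking AT P' := Set.Pairwise.mono Set.sdiff_subset hP
  have hU := hP'pack.ncard_mul_domNum_le hS
  have hL := hS.domNum_add_one_le_ncard_of_leaves (domNum_lt_card_of_connected hGconn hGcard)
    hl₁₂ hvl₂.ne
    (fun t ht => eq_of_arc_of_ncard_neighborSet_ugr_eq_one hirrT hdeg₁ hvl₁.symm (Or.inl ht))
    (fun t ht => eq_of_arc_of_ncard_neighborSet_ugr_eq_one hirrT hdeg₂ hvl₂.symm (Or.inl ht))
  have hsplit := S.ncard_inter_prod_add_ncard_inter_prod_le hdisj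
  have hmul := Nat.mul_le_mul_right (domNum VG AG) (hT.domNum_le_packNum.trans (hPcard ▸ hP'))
  rw [add_one_mul, ← heq, ← hScard] at hmul
  omega

theorem stmt17 {VT VG : Type*} [Fintype VT] [Fintype VG]
    (AT : VT → VT → Prop) (AG : VG → VG → Prop)
    (hirrT : ∀ v, ¬ AT v v) (hirrG : ∀ v, ¬ AG v v)
    (hGconn : (ugr AG).Connected) (hGcard : 2 ≤ Fintype.card VG)
    (hT : IsDitree AT)
    (heq : domNum (VT × VG) (cartArc AT AG) = domNum VT AT * domNum VG AG) :
    ¬ ∃ (v l1 l2 : VT), l1 ≠ l2 ∧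
        (ugr AT).Adj v l1 ∧ (ugr AT).Adj v l2 ∧
        ((ugr AT).neighborSet l1).ncard = 1 ∧ ((ugr AT).neighborSet l2).ncard = 1 ∧
        (∃ u, AT u l1) ∧ (∃ u, AT u l2) :=
  stmt17_general AT AG hirrT hGconn hGcard hT heq
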